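/- arXiv:2002.09092 — 2 statements merged into one kernel-verified Lean document; each statement's English description precedes it below -/
import Mathlib

section
/- Let G be a connected graph with σ₂(G) ≥ |V(G)| - k (k ≥ 2) and no spanning tree with at most k leaves. Let P be a longest path with endpoints u, v, and let x₁,…,x_{k-1} be the vertices of G not on P. Then {u, x₁, …, x_{k-1}, v} is an independent set in G. -/
open SimpleGraph

/-- The degree of a vertex, as the cardinality of its neighbor set. -/
noncomputable def SimpleGraph.deg' {V : Type*} (G : SimpleGraph V) (u : V) : ℕ :=
  (G.neighborSet u).ncard

/-- `G` has a spanning tree with at most `k` leaves. -/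
def SimpleGraph.HasSpanningKEndedTree {V : Type*} (G : SimpleGraph V) (k : ℕ) : Prop :=
  ∃ T : SimpleGraph V, T ≤ G ∧ T.IsTree ∧ {x : V | (T.neighborSet x).ncard = 1}.ncard ≤ k

/-!
Write `L` for the length of the longest path `p`. All neighbours of its ends `u` and `v` lie on
`p`. If `u ~ p (i+1)` and `v ~ p i`, then `p` together with these two chords is a cycle through
all of `V(p)`; since `G` is connected and `p` is not spanning (it would otherwise be a spanning
tree with two leaves), some vertex off `p` is adjacent to this cycle, and opening the cycle there
gives a path longer than `p`. Hence `u` and `v` are not adjacent, and the index sets of `N(u)`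
shifted down by one and of `N(v)` are disjoint subsets of `[0, L)`, so `d(u) + d(v) ≤ L` and the
`σ₂` bound leaves at most `k - 1` vertices off `p`. Every spanning tree containing `p` has its
leaves among `u`, `v` and the vertices off `p`; if two vertices `x`, `y` off `p` were adjacent, a
spanning tree containing `p` and `xy` would also have a non-leaf among `x`, `y`, hence at most
`k` leaves.
-/

theorem Cycle.chain_append_reverse {α : Type*} {r : α → α → Prop} [Std.Symm r]
    {A B : List α} (hA : A ≠ []) (hB : B ≠ []) (hAB : (A ++ B).IsChain r)
    (hlast : r (A.getLast hA) (B.getLast hB)) (hhead : r (B.head hB) (A.head hA)) :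
    Cycle.Chain r (A ++ B.reverse : List α) := by
  rw [Cycle.chain_ne_nil _ (by simp [hA]), List.getLast_append_of_ne_nil _ (by simpa),
    List.getLast_reverse]
  rw [List.isChain_append] at hAB
  have hBr : B.reverse.IsChain r := List.isChain_reverse.mpr (hAB.2.1.imp fun _ _ h => symm h)
  rw [← List.cons_append, List.isChain_append]
  refine ⟨List.isChain_cons.mpr ⟨?_, hAB.1⟩, hBr, ?_⟩
  · intro y hy
    rw [List.head?_eq_some_head hA] at hy
    cases hy; exact hhead
  · intro x hx y hy
    rw [List.getLast?_cons, List.getLast?_eq_some_getLast hA] at hx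
    simp only [Option.getD_some, Option.mem_def, Option.some.injEq] at hx
    rw [List.head?_reverse, List.getLast?_eq_some_getLast hB] at hy
    cases hx; cases hy; exact hlast

theorem Cycle.Chain.exists_isChain_cons {α : Type*} {r : α → α → Prop} {l : List α}
    (h : Cycle.Chain r (l : Cycle α)) {a : α} (ha : a ∈ l) :
    ∃ l', (a :: l') ~r l ∧ (a :: l').IsChain r := by
  classical
  obtain ⟨l', hl'⟩ : ∃ l', l.rotate (l.idxOf a) = a :: l' := by
    have := List.head?_rotate (List.idxOf_lt_length_of_mem ha)
    rw [List.getElem?_idxOf ha] at this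
    exact ⟨_, (List.eq_cons_of_mem_head? this)⟩
  have hrot : (a :: l') ~r l := hl' ▸ List.IsRotated.forall l _
  refine ⟨l', hrot, ?_⟩
  rw [← Cycle.coe_eq_coe.mpr hrot, Cycle.chain_coe_cons, ← List.cons_append] at h
  exact (List.isChain_append.mp h).1

theorem Nat.ncard_add_ncard_le_of_pred_notMem {I J : Set ℕ} {L : ℕ} (hI : I ⊆ Set.Ioc 0 L)
    (hJ : J ⊆ Set.Iio L) (hIJ : ∀ n ∈ I, n - 1 ∉ J) : I.ncard + J.ncard ≤ L := by
  have hinj : Set.InjOn (· - 1) I := fun a ha b hb (h : a - 1 = b - 1) => by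
    obtain ⟨ha0, -⟩ := hI ha
    obtain ⟨hb0, -⟩ := hI hb
    omega
  have hIfin : I.Finite := (Set.finite_Ioc 0 L).subset hI
  rw [← hinj.ncard_image, ← Set.ncard_union_eq ?_ (hIfin.image _)
    ((Set.finite_Iio L).subset hJ)]
  · calc _ ≤ (Set.Iio L).ncard := by
          refine Set.ncard_le_ncard (Set.union_subset ?_ hJ) (Set.finite_Iio L)
          rintro _ ⟨n, hn, rfl⟩
          obtain ⟨hn0, hnL⟩ := hI hn
          exact Set.mem_Iio.mpr (show n - 1 < L by omega)
      _ = L := Set.ncard_Iio_nat L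
  · rw [Set.disjoint_left]
    rintro _ ⟨n, hn, rfl⟩
    exact hIJ n hn

namespace SimpleGraph
variable {V : Type*} {G : SimpleGraph V} {u v w x y : V}

lemma HasSpanningKEndedTree.mono {k l : ℕ} (h : G.HasSpanningKEndedTree k) (hkl : k ≤ l) :
    G.HasSpanningKEndedTree l := by
  obtain ⟨T, hTG, hT, hk⟩ := h
  exact ⟨T, hTG, hT, hk.trans hkl⟩

lemma Connected.exists_adj_of_mem_of_notMem (hconn : G.Connected) {S : Set V} {a b : V}
    (ha : a ∈ S) (hb : b ∉ S) : ∃ x ∈ S, ∃ y ∉ S, G.Adj x y := by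
  obtain ⟨⟨⟨x, y⟩, hxy⟩, -, hx, hy⟩ := (hconn a b).some.exists_boundary_dart S ha hb
  exact ⟨x, hx, y, hy, hxy⟩

lemma Connected.ncard_neighborSet_ne_one_of_adj (hconn : G.Connected) (hxy : G.Adj x y)
    {z : V} (hzx : z ≠ x) (hzy : z ≠ y) (hx : (G.neighborSet x).ncard = 1) :
    (G.neighborSet y).ncard ≠ 1 := by
  intro hy
  have hleaf :
      ∀ {a b c : V}, (G.neighborSet a).ncard = 1 → G.Adj a b → G.Adj a c → c = b := by
    intro a b c ha hab hac
    obtain ⟨d, hd⟩ := Set.ncard_eq_one.mp ha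
    have hb : b ∈ G.neighborSet a := hab
    have hc : c ∈ G.neighborSet a := hac
    rw [hd] at hb hc
    exact hc.trans hb.symm
  obtain ⟨a, ha, b, hb, hab⟩ := hconn.exists_adj_of_mem_of_notMem (S := {x, y}) (b := z)
    (Set.mem_insert x _) (by simp [hzx, hzy])
  rcases ha with rfl | rfl
  · exact hb (Or.inr (hleaf hx hxy hab))
  · exact hb (Or.inl (hleaf hy hxy.symm hab))

lemma Subgraph.not_reachable_spanningCoe_of_notMem_verts {H : G.Subgraph} {a b : V}
    (ha : a ∉ H.verts) (hab : a ≠ b) : ¬H.spanningCoe.Reachable a b := by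
  rintro ⟨q⟩
  cases q with
  | nil => exact hab rfl
  | cons h _ => exact ha (H.edge_vert h)

lemma Walk.exists_perm_support_cycleChain (p : G.Walk u v) {i : ℕ} (hi : i < p.length)
    (hu : G.Adj u (p.getVert (i + 1))) (hv : G.Adj v (p.getVert i)) :
    ∃ c : List V, c.Perm p.support ∧ Cycle.Chain G.Adj c := by
  set s := p.support
  have hlen : s.length = p.length + 1 := p.length_support
  have hA : s.take (i + 1) ≠ [] := by simp [s]
  have hB : s.drop (i + 1) ≠ [] := by rw [ne_eq, List.drop_eq_nil_iff]; omega
  refine ⟨s.take (i + 1) ++ (s.drop (i + 1)).reverse, ?_, ?_⟩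
  · simpa using (List.reverse_perm (s.drop (i + 1))).append_left (s.take (i + 1))
  have : Std.Symm G.Adj := G.symm
  refine Cycle.chain_append_reverse hA hB ?_ ?_ ?_
  · rw [List.take_append_drop]
    exact p.isChain_adj_support
  · rw [List.getLast_take, List.getLast_drop, p.getLast_support,
      ← p.getVert_eq_support_getElem? (by omega)]
    simpa using hv.symm
  · rw [List.head_drop, List.head_take, ← p.getVert_eq_support_getElem (by omega)]
    simpa [s] using hu.symm

namespace Walk.IsPath
variable {p : G.Walk u v}

lemma ncard_eq_ncard_setOf_getVert_mem (hp : p.IsPath) {S : Set V}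
    (hS : ∀ z ∈ S, z ∈ p.support) :
    S.ncard = {n | n ≤ p.length ∧ p.getVert n ∈ S}.ncard := by
  have himage : p.getVert '' {n | n ≤ p.length ∧ p.getVert n ∈ S} = S := by
    ext z
    refine ⟨?_, fun hz => ?_⟩
    · rintro ⟨n, ⟨-, hn⟩, rfl⟩
      exact hn
    · obtain ⟨n, rfl, hn⟩ := mem_support_iff_exists_getVert.mp (hS z hz)
      exact ⟨n, ⟨hn, hz⟩, rfl⟩
  rw [← (hp.getVert_injOn.mono fun n hn => hn.1).ncard_image, himage]

lemma ncard_compl_support_add [Finite V] (hp : p.IsPath) :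
    {z | z ∉ p.support}.ncard + (p.length + 1) = Nat.card V := by
  classical
  have hcompl : {z | z ∉ p.support} = (p.support.toFinset : Set V)ᶜ := by ext; simp
  rw [hcompl, ← Set.ncard_add_ncard_compl (p.support.toFinset : Set V), Set.ncard_coe_finset,
    List.toFinset_card_of_nodup hp.support_nodup, p.length_support, add_comm]

lemma isAcyclic_spanningCoe_toSubgraph (hp : p.IsPath) : p.toSubgraph.spanningCoe.IsAcyclic := by
  induction p with
  | nil => exact isAcyclic_bot.anti fun a b h => by simp at h
  | @cons u' v' w' h q ih =>
    rw [Walk.cons_isPath_iff] at hp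
    have : (cons h q).toSubgraph.spanningCoe = q.toSubgraph.spanningCoe ⊔ edge u' v' := by
      ext a b
      simp [edge_adj, or_comm]
    rw [this]
    exact (ih hp.1).sup_edge_of_not_reachable
      (Subgraph.not_reachable_spanningCoe_of_notMem_verts (by simpa using hp.2) h.ne)

lemma eq_or_eq_of_ncard_neighborSet_eq_one [Finite V] {T : SimpleGraph V} (hp : p.IsPath)
    (hT : p.toSubgraph.spanningCoe ≤ T) (hx : x ∈ p.support)
    (h1 : (T.neighborSet x).ncard = 1) : x = u ∨ x = v := by
  obtain ⟨n, rfl, hn⟩ := mem_support_iff_exists_getVert.mp hx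
  by_contra! h
  have h0 : n ≠ 0 := by rintro rfl; simp at h
  have hL : n < p.length := lt_of_le_of_ne hn (by rintro rfl; simp at h)
  have := Set.ncard_le_ncard (s := p.toSubgraph.neighborSet (p.getVert n))
    (t := T.neighborSet (p.getVert n)) (fun y hy => hT hy) (Set.toFinite _)
  rw [hp.ncard_neighborSet_toSubgraph_internal_eq_two h0 hL, h1] at this
  omega

lemma hasSpanningKEndedTree_two [Finite V] (hconn : G.Connected) (hp : p.IsPath)
    (h : ∀ z, z ∈ p.support) : G.HasSpanningKEndedTree 2 := by
  obtain ⟨T, hpT, hTG, hT⟩ := hconn.exists_isTree_le_of_le_of_isAcyclic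
    p.toSubgraph.spanningCoe_le hp.isAcyclic_spanningCoe_toSubgraph
  refine ⟨T, hTG, hT, ?_⟩
  calc _ ≤ ({u, v} : Set V).ncard :=
        Set.ncard_le_ncard (fun x hx => hp.eq_or_eq_of_ncard_neighborSet_eq_one hpT (h x) hx)
    _ ≤ 2 := (Set.ncard_insert_le _ _).trans (by simp)

lemma hasSpanningKEndedTree_of_adj [Finite V] (hconn : G.Connected) (hp : p.IsPath)
    (hx : x ∉ p.support) (hy : y ∉ p.support) (hxy : G.Adj x y) :
    G.HasSpanningKEndedTree ({z | z ∉ p.support}.ncard + 1) := by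
  have hH : (p.toSubgraph.spanningCoe ⊔ edge x y).IsAcyclic :=
    hp.isAcyclic_spanningCoe_toSubgraph.sup_edge_of_not_reachable
      (Subgraph.not_reachable_spanningCoe_of_notMem_verts (by simpa using hx) hxy.ne)
  obtain ⟨T, hHT, hTG, hT⟩ := hconn.exists_isTree_le_of_le_of_isAcyclic
    (sup_le p.toSubgraph.spanningCoe_le ((edge_le_iff G).mpr (Or.inr hxy))) hH
  have hTxy : T.Adj x y := hHT (Or.inr (by simp [edge_adj, hxy.ne]))
  have hux : u ≠ x := fun h => hx (h ▸ p.start_mem_support)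
  have huy : u ≠ y := fun h => hy (h ▸ p.start_mem_support)
  obtain ⟨z, hz, hzleaf⟩ : ∃ z, z ∉ p.support ∧ (T.neighborSet z).ncard ≠ 1 := by
    by_cases hx1 : (T.neighborSet x).ncard = 1
    · exact ⟨y, hy, hT.connected.ncard_neighborSet_ne_one_of_adj hTxy hux huy hx1⟩
    · exact ⟨x, hx, hx1⟩
  refine ⟨T, hTG, hT, ?_⟩
  have hleaves :
      {w | (T.neighborSet w).ncard = 1} ⊆ ({u, v} ∪ {w | w ∉ p.support}) \ {z} := by
    intro w hw
    refine ⟨?_, fun h => hzleaf (h ▸ hw)⟩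
    by_cases hwp : w ∈ p.support
    · exact Or.inl (hp.eq_or_eq_of_ncard_neighborSet_eq_one (le_sup_left.trans hHT) hwp hw)
    · exact Or.inr hwp
  calc _ ≤ _ := Set.ncard_le_ncard hleaves
    _ = ({u, v} ∪ {w | w ∉ p.support}).ncard - 1 :=
        Set.ncard_sdiff_singleton_of_mem (Or.inr hz)
    _ ≤ _ := by
      have := Set.ncard_union_le {u, v} {w | w ∉ p.support}
      have := Set.ncard_insert_le u {v}
      rw [Set.ncard_singleton] at this
      omega

end Walk.IsPath

def Walk.IsLongestPath (p : G.Walk u v) : Prop :=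
  p.IsPath ∧ ∀ (a b : V) (q : G.Walk a b), q.IsPath → q.length ≤ p.length

namespace Walk.IsLongestPath
variable {p : G.Walk u v}

lemma length_le_of_isChain (hP : p.IsLongestPath) {l : List V} (hne : l ≠ [])
    (hl : l.IsChain G.Adj) (hnd : l.Nodup) : l.length ≤ p.length + 1 := by
  have := hP.2 _ _ (Walk.ofSupport l hne hl) (by rwa [Walk.isPath_def, Walk.support_ofSupport])
  rw [Walk.length_ofSupport] at this
  have := List.length_pos_iff.mpr hne
  omega

lemma reverse (hP : p.IsLongestPath) : p.reverse.IsLongestPath :=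
  ⟨hP.1.reverse, by simpa using hP.2⟩

lemma mem_support_of_adj_start (hP : p.IsLongestPath) (h : G.Adj u w) : w ∈ p.support := by
  by_contra hw
  have := hP.2 _ _ _ (hP.1.cons (h := h.symm) hw)
  simp at this

lemma mem_support_of_adj_end (hP : p.IsLongestPath) (h : G.Adj v w) : w ∈ p.support := by
  simpa using hP.reverse.mem_support_of_adj_start h

lemma not_adj_end_of_adj_start (hP : p.IsLongestPath) (hconn : G.Connected)
    (hw : w ∉ p.support) {i : ℕ} (hi : i < p.length) (hu : G.Adj u (p.getVert (i + 1))) :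
    ¬G.Adj v (p.getVert i) := by
  intro hv
  obtain ⟨c, hc, hcycle⟩ := p.exists_perm_support_cycleChain hi hu hv
  obtain ⟨t, ht, w₀, hw₀, htw₀⟩ :=
    hconn.exists_adj_of_mem_of_notMem (S := {z | z ∈ p.support}) p.start_mem_support hw
  obtain ⟨l, hrot, hl⟩ := hcycle.exists_isChain_cons (hc.mem_iff.mpr ht)
  have hperm := hrot.perm.trans hc
  have := hP.length_le_of_isChain (l := w₀ :: t :: l) (by simp)
    (List.isChain_cons_cons.mpr ⟨htw₀.symm, hl⟩)
    (List.nodup_cons.mpr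
      ⟨fun h => hw₀ (hperm.mem_iff.mp h), hperm.nodup_iff.mpr hP.1.support_nodup⟩)
  rw [List.length_cons, hperm.length_eq, length_support] at this
  omega

lemma start_ne_end (hP : p.IsLongestPath) (hconn : G.Connected) (hw : w ∉ p.support) :
    u ≠ v := by
  obtain ⟨x, -, y, -, hxy⟩ :=
    hconn.exists_adj_of_mem_of_notMem (S := {z | z ∈ p.support}) p.start_mem_support hw
  rintro rfl
  have := hP.2 _ _ (Walk.cons hxy .nil) (by simp [hxy.ne])
  simp [length_eq_zero_iff.mpr (isPath_iff_nil.mp hP.1)] at this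

lemma not_adj_start_end (hP : p.IsLongestPath) (hconn : G.Connected) (hw : w ∉ p.support) :
    ¬G.Adj u v := by
  intro huv
  have hlen : 1 ≤ p.length := by simpa using hP.2 _ _ (Walk.cons huv .nil) (by simp [huv.ne])
  have hlast := p.adj_getVert_succ (i := p.length - 1) (by omega)
  rw [Nat.sub_add_cancel hlen, getVert_length] at hlast
  exact hP.not_adj_end_of_adj_start hconn hw (i := p.length - 1) (by omega)
    (by rwa [Nat.sub_add_cancel hlen, getVert_length]) hlast.symm

lemma deg'_add_deg'_le (hP : p.IsLongestPath) (hconn : G.Connected) (hw : w ∉ p.support) :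
    G.deg' u + G.deg' v ≤ p.length := by
  have hpos : ∀ n, G.Adj u (p.getVert n) → 0 < n := by
    rintro n h
    refine Nat.pos_of_ne_zero ?_
    rintro rfl
    exact h.ne (p.getVert_zero).symm
  rw [deg', deg',
    hP.1.ncard_eq_ncard_setOf_getVert_mem (S := G.neighborSet u)
      fun _ => hP.mem_support_of_adj_start,
    hP.1.ncard_eq_ncard_setOf_getVert_mem (S := G.neighborSet v)
      fun _ => hP.mem_support_of_adj_end]
  refine Nat.ncard_add_ncard_le_of_pred_notMem ?_ ?_ ?_
  · rintro n ⟨hn, h⟩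
    exact ⟨hpos n h, hn⟩
  · rintro n ⟨hn, h⟩
    refine lt_of_le_of_ne hn ?_
    rintro rfl
    exact h.ne p.getVert_length.symm
  · rintro n ⟨hn, h⟩ ⟨-, h'⟩
    have := hpos n h
    exact hP.not_adj_end_of_adj_start hconn hw (i := n - 1) (by omega)
      (by rwa [Nat.sub_add_cancel this]) h'

end Walk.IsLongestPath
end SimpleGraph

theorem stmt_12 {V : Type*} [Fintype V] (G : SimpleGraph V) (k : ℕ) (hk : 2 ≤ k)
    (hconn : G.Connected)
    (hσ : ∀ u v : V, u ≠ v → ¬G.Adj u v →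
      (Fintype.card V : ℤ) - k ≤ (G.deg' u : ℤ) + (G.deg' v : ℤ))
    (hnotree : ¬G.HasSpanningKEndedTree k)
    (u v : V) (p : G.Walk u v) (hp : p.IsPath)
    (hlongest : ∀ (a b : V) (q : G.Walk a b), q.IsPath → q.length ≤ p.length) :
    ∀ x y : V, (x = u ∨ x = v ∨ x ∉ p.support) → (y = u ∨ y = v ∨ y ∉ p.support) →
      ¬G.Adj x y := by
  have hP : p.IsLongestPath := ⟨hp, hlongest⟩
  obtain ⟨w, hw⟩ : ∃ w, w ∉ p.support := by
    by_contra! h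
    exact hnotree ((hp.hasSpanningKEndedTree_two hconn h).mono hk)
  have huv := hP.not_adj_start_end hconn hw
  have hoff : ∀ x y, x ∉ p.support → y ∉ p.support → ¬G.Adj x y := by
    intro x y hx hy hxy
    have hσuv := hσ u v (hP.start_ne_end hconn hw) huv
    have hdeg := hP.deg'_add_deg'_le hconn hw
    have hcard := hp.ncard_compl_support_add
    rw [Nat.card_eq_fintype_card] at hcard
    exact hnotree ((hp.hasSpanningKEndedTree_of_adj hconn hx hy hxy).mono (by omega))
  intro x y hx hy hxy
  rcases hx with rfl | rfl | hx <;> rcases hy with rfl | rfl | hy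
  · exact hxy.ne rfl
  · exact huv hxy
  · exact hy (hP.mem_support_of_adj_start hxy)
  · exact huv hxy.symm
  · exact hxy.ne rfl
  · exact hy (hP.mem_support_of_adj_end hxy)
  · exact hx (hP.mem_support_of_adj_start hxy.symm)
  · exact hx (hP.mem_support_of_adj_end hxy.symm)
  · exact hoff x y hx hy hxy
end

section
/- Let G be a connected graph with σ₂(G) ≥ |V(G)| - k (k ≥ 2) and no spanning tree with at most k leaves, and let P be a longest path with endpoint v. Then no two distinct neighbors of v are consecutive on P (i.e., for distinct y, z ∈ N(v), yz is not an edge of P). -/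
open SimpleGraph

/-!
Let `P = p₀ ⋯ p_L` be a longest path from `u` to `v` and `W` the set of vertices off `P`;
all neighbours of `u` and `v` lie on `P`. Completing `P` to a spanning tree, whose leaves
lie in `{u, v} ∪ W`, gives `k ≤ |W| + 1`; an edge inside `W` would save one more leaf.
If `v ~ pₘ` and `u ~ pₘ₊₁`, then `P` closes to a cycle, which a neighbour in `W` of `P`
extends to a longer path; counting gives `deg u + deg v ≤ L`, so `σ₂` yields `|W| ≤ k - 1`
and `W` is independent. For `w ∈ W`, `w ~ pₘ` and `u ~ pₘ₊₁` would give the longer path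
`w pₘ ⋯ p₀ pₘ₊₁ ⋯ p_L`, so again `deg w + deg u ≤ L`, and now `σ₂` forces equality: every
`m < L` has `w ~ pₘ` or `u ~ pₘ₊₁`. Hence `w` is adjacent to every `pₘ ≠ v` adjacent to `v`,
and could be inserted between two consecutive such vertices.
-/

namespace SimpleGraph

variable {V : Type*} {G : SimpleGraph V} {u v w x y : V}

theorem Preconnected.eq_or_eq_of_adj_of_ncard_neighborSet_eq_one {a b : V}
    (hG : G.Preconnected) (hab : G.Adj a b) (ha : (G.neighborSet a).ncard = 1)
    (hb : (G.neighborSet b).ncard = 1) (c : V) : c = a ∨ c = b := by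
  have hN {x y : V} (hxy : G.Adj x y) (hx : (G.neighborSet x).ncard = 1) :
      G.neighborSet x = {y} := by
    obtain ⟨z, hz⟩ := Set.ncard_eq_one.1 hx
    have hy : y ∈ G.neighborSet x := hxy
    rw [hz] at hy ⊢
    rw [hy]
  by_contra! hc
  obtain ⟨d, -, hd, hd'⟩ :=
    (hG a c).some.exists_boundary_dart {a, b} (by simp) (by simp [hc.1, hc.2])
  have hdN : d.snd ∈ G.neighborSet d.fst := d.adj
  simp only [Set.mem_insert_iff, Set.mem_singleton_iff] at hd hd'
  rcases hd with h | h <;> rw [h] at hdN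
  · rw [hN hab ha] at hdN
    exact hd' (Or.inr hdN)
  · rw [hN hab.symm hb] at hdN
    exact hd' (Or.inl hdN)

theorem Connected.exists_adj_mem_not_mem {s : Set V} (hG : G.Connected) {a b : V} (ha : a ∈ s)
    (hb : b ∉ s) : ∃ x ∈ s, ∃ y ∉ s, G.Adj x y := by
  obtain ⟨d, -, hd, hd'⟩ := (hG a b).some.exists_boundary_dart s ha hb
  exact ⟨_, hd, _, hd', d.adj⟩

theorem deg'_eq_ncard_of_neighborSet_subset {f : ℕ → V} {L : ℕ} (hf : Set.InjOn f (Set.Iio L))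
    (hN : G.neighborSet x ⊆ f '' Set.Iio L) :
    G.deg' x = {m | m < L ∧ G.Adj x (f m)}.ncard := by
  have : G.neighborSet x = f '' {m | m < L ∧ G.Adj x (f m)} := by
    ext z
    refine ⟨fun hz => ?_, fun ⟨m, ⟨_, hm⟩, hmz⟩ => hmz ▸ hm⟩
    obtain ⟨m, hm, rfl⟩ := hN hz
    exact ⟨m, ⟨hm, hz⟩, rfl⟩
  rw [deg', this, (hf.mono fun m hm => hm.1).ncard_image]

namespace Walk

theorem exists_support_perm_cons_support_tail [DecidableEq V] (c : G.Walk u u)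
    (hy : y ∈ c.support) (hyw : G.Adj y w) :
    ∃ a b, ∃ r : G.Walk a b, r.support.Perm (w :: c.support.tail) := by
  by_cases hc : c.Nil
  · exact ⟨w, w, nil, by simp [hc.eq_nil]⟩
  · have hc' : ¬(c.rotate y hy).Nil := by rwa [nil_rotate]
    refine ⟨_, _, (c.rotate y hy).tail.concat hyw, ?_⟩
    rw [support_concat, support_tail_of_not_nil _ hc']
    exact (List.perm_append_singleton _ _).trans ((support_rotate c y hy).perm.cons w)

theorem support_tail_append_perm {a b : V} (p : G.Walk u a) (q : G.Walk b v) (hav : G.Adj a v)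
    (hbu : G.Adj b u) :
    (p.append (cons hav (q.reverse.concat hbu))).support.tail.Perm (p.support ++ q.support) := by
  rw [tail_support_append, support_cons, List.tail_cons, support_concat, support_reverse,
    ← List.append_assoc]
  refine (List.perm_append_singleton _ _).trans ?_
  rw [← List.cons_append, cons_tail_support]
  exact (List.reverse_perm _).append_left _

variable {p : G.Walk u v}

theorem support_eq_support_take_append_support_drop {m : ℕ} (hm : m < p.length) :
    p.support = (p.take m).support ++ (p.drop (m + 1)).support := by
  rw [support_take, drop_support_eq_support_drop_min, min_eq_left hm, List.take_append_drop]

theorem IsPath.card_eq_length_add_one_add_ncard [Fintype V] (hp : p.IsPath) :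
    Fintype.card V = p.length + 1 + {x | x ∉ p.support}.ncard := by
  classical
  have hS : {x | x ∈ p.support}.ncard = p.length + 1 := by
    rw [← List.coe_toFinset, Set.ncard_coe_finset, List.toFinset_card_of_nodup hp.support_nodup,
      length_support]
  have h := Set.ncard_add_ncard_compl {x | x ∈ p.support}
  rw [hS, Nat.card_eq_fintype_card] at h
  exact h.symm

theorem IsPath.deg'_add_deg'_eq_ncard (hp : p.IsPath)
    (hx : G.neighborSet x ⊆ {z | z ∈ p.support ∧ z ≠ v})
    (hy : G.neighborSet y ⊆ {z | z ∈ p.support ∧ z ≠ u})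
    (hxy : ∀ m < p.length, G.Adj x (p.getVert m) → ¬G.Adj y (p.getVert (m + 1))) :
    G.deg' x + G.deg' y = ({m | m < p.length ∧ G.Adj x (p.getVert m)} ∪
      {m | m < p.length ∧ G.Adj y (p.getVert (m + 1))}).ncard := by
  have hinj := hp.getVert_injOn
  rw [deg'_eq_ncard_of_neighborSet_subset (hinj.mono Set.Iio_subset_Iic_self),
    deg'_eq_ncard_of_neighborSet_subset (f := fun m => p.getVert (m + 1)) fun a ha b hb h =>
      Nat.succ_injective (hinj (Nat.succ_le_of_lt ha) (Nat.succ_le_of_lt hb) h),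
    Set.ncard_union_eq _ ((Set.finite_Iio _).subset fun m hm => hm.1)
      ((Set.finite_Iio _).subset fun m hm => hm.1)]
  · exact Set.disjoint_left.2 fun m hmx hmy => hxy m hmx.1 hmx.2 hmy.2
  · intro z hz
    obtain ⟨hzp, hzu⟩ := hy hz
    obtain ⟨n, rfl, hn⟩ := mem_support_iff_exists_getVert.1 hzp
    obtain ⟨m, rfl⟩ := Nat.exists_eq_succ_of_ne_zero (n := n)
      (by rintro rfl; exact hzu p.getVert_zero)
    exact ⟨m, hn, rfl⟩
  · intro z hz
    obtain ⟨hzp, hzv⟩ := hx hz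
    obtain ⟨n, rfl, hn⟩ := mem_support_iff_exists_getVert.1 hzp
    exact ⟨n, lt_of_le_of_ne hn (by rintro rfl; exact hzv p.getVert_length), rfl⟩

theorem IsPath.deg'_add_deg'_le_length (hp : p.IsPath)
    (hx : G.neighborSet x ⊆ {z | z ∈ p.support ∧ z ≠ v})
    (hy : G.neighborSet y ⊆ {z | z ∈ p.support ∧ z ≠ u})
    (hxy : ∀ m < p.length, G.Adj x (p.getVert m) → ¬G.Adj y (p.getVert (m + 1))) :
    G.deg' x + G.deg' y ≤ p.length := by
  rw [hp.deg'_add_deg'_eq_ncard hx hy hxy]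
  simpa using Set.ncard_le_ncard (Set.union_subset (fun m hm => hm.1) fun m hm => hm.1 :
    _ ⊆ Set.Iio p.length)

theorem IsPath.adj_or_adj_of_length_le (hp : p.IsPath)
    (hx : G.neighborSet x ⊆ {z | z ∈ p.support ∧ z ≠ v})
    (hy : G.neighborSet y ⊆ {z | z ∈ p.support ∧ z ≠ u})
    (hxy : ∀ m < p.length, G.Adj x (p.getVert m) → ¬G.Adj y (p.getVert (m + 1)))
    (hL : p.length ≤ G.deg' x + G.deg' y) {m : ℕ} (hm : m < p.length) :
    G.Adj x (p.getVert m) ∨ G.Adj y (p.getVert (m + 1)) := by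
  rw [hp.deg'_add_deg'_eq_ncard hx hy hxy] at hL
  set A := {m | m < p.length ∧ G.Adj x (p.getVert m)}
  set B := {m | m < p.length ∧ G.Adj y (p.getVert (m + 1))}
  have hAB : A ∪ B = Set.Iio p.length :=
    Set.eq_of_subset_of_ncard_le (Set.union_subset (fun m hm => hm.1) fun m hm => hm.1)
      (by simpa using hL) (Set.finite_Iio _)
  rcases (hAB ▸ hm : m ∈ A ∪ B) with h | h
  exacts [Or.inl h.2, Or.inr h.2]

theorem not_reachable_spanningCoe_toSubgraph (p : G.Walk u v) (hx : x ∉ p.support)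
    (hxy : x ≠ y) : ¬p.toSubgraph.spanningCoe.Reachable x y := by
  rintro ⟨q⟩
  cases q with
  | nil => exact hxy rfl
  | cons h _ => exact hx (p.mem_verts_toSubgraph.1 (p.toSubgraph.edge_vert h))

theorem IsPath.isAcyclic_spanningCoe_toSubgraph_s14 (hp : p.IsPath) :
    p.toSubgraph.spanningCoe.IsAcyclic := by
  induction p with
  | nil => exact isAcyclic_bot.anti fun a b h => by simp_all
  | cons h q ih =>
    rw [cons_isPath_iff] at hp
    rw [Walk.toSubgraph, Subgraph.sup_spanningCoe, Subgraph.spanningCoe_subgraphOfAdj, sup_comm]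
    exact (ih hp.1).sup_edge_of_not_reachable (q.not_reachable_spanningCoe_toSubgraph hp.2 h.ne)

theorem IsPath.leaves_subset [Finite V] {T : SimpleGraph V} (hp : p.IsPath)
    (hT : p.toSubgraph.spanningCoe ≤ T) :
    {x | (T.neighborSet x).ncard = 1} ⊆ insert u (insert v {x | x ∉ p.support}) := by
  intro x hx
  by_contra! hcon
  simp only [Set.mem_insert_iff, Set.mem_ofPred_eq, not_or, not_not] at hcon
  obtain ⟨hxu, hxv, hxp⟩ := hcon
  obtain ⟨i, rfl, hi⟩ := mem_support_iff_exists_getVert.1 hxp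
  have h2 := hp.ncard_neighborSet_toSubgraph_internal_eq_two (i := i)
    (by rintro rfl; simp at hxu) (lt_of_le_of_ne hi (by rintro rfl; simp at hxv))
  have : (p.toSubgraph.neighborSet (p.getVert i)).ncard ≤ (T.neighborSet (p.getVert i)).ncard :=
    Set.ncard_le_ncard (fun z hz => hT hz) (Set.toFinite _)
  simp only [Set.mem_ofPred_eq] at hx
  omega

theorem IsPath.le_ncard_not_mem_support_add_one [Finite V] {k : ℕ} (hp : p.IsPath)
    (hG : G.Connected) (hk : ¬G.HasSpanningKEndedTree k) :
    k ≤ {x | x ∉ p.support}.ncard + 1 := by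
  obtain ⟨T, hpT, hTG, hT⟩ := hG.exists_isTree_le_of_le_of_isAcyclic
    (Subgraph.spanningCoe_le _) hp.isAcyclic_spanningCoe_toSubgraph_s14
  have hleaves := Set.ncard_le_ncard (hp.leaves_subset hpT) (Set.toFinite _)
  grw [Set.ncard_insert_le, Set.ncard_insert_le] at hleaves
  by_contra! hlt
  exact hk ⟨T, hTG, hT, by omega⟩

theorem IsPath.le_ncard_not_mem_support_of_adj [Finite V] {k : ℕ} (hp : p.IsPath)
    (hG : G.Connected) (hk : ¬G.HasSpanningKEndedTree k) {a b : V} (ha : a ∉ p.support)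
    (hb : b ∉ p.support) (hab : G.Adj a b) : k ≤ {x | x ∉ p.support}.ncard := by
  obtain ⟨T, hpT, hTG, hT⟩ := hG.exists_isTree_le_of_le_of_isAcyclic
    (sup_le (Subgraph.spanningCoe_le _) ((edge_le_iff G).2 (Or.inr hab)))
    (hp.isAcyclic_spanningCoe_toSubgraph_s14.sup_edge_of_not_reachable
      (p.not_reachable_spanningCoe_toSubgraph ha hab.ne))
  have hTab : T.Adj a b := hpT (Or.inr ((edge_adj ..).2 ⟨Or.inl ⟨rfl, rfl⟩, hab.ne⟩))
  have hleaves := hp.leaves_subset (le_sup_left.trans hpT)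
  obtain ⟨c, hc, hcT⟩ : ∃ c ∉ p.support, (T.neighborSet c).ncard ≠ 1 := by
    by_contra! h
    rcases hT.connected.preconnected.eq_or_eq_of_adj_of_ncard_neighborSet_eq_one hTab
      (h a ha) (h b hb) u with rfl | rfl
    · exact ha p.start_mem_support
    · exact hb p.start_mem_support
  have := Set.ncard_le_ncard (Set.subset_sdiff_singleton hleaves hcT) (Set.toFinite _)
  rw [Set.ncard_sdiff_singleton_of_mem (by simp [hc])] at this
  grw [Set.ncard_insert_le, Set.ncard_insert_le] at this
  by_contra! hlt
  exact hk ⟨T, hTG, hT, by omega⟩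

structure IsLongestPath_s14 (p : G.Walk u v) : Prop where
  isPath : p.IsPath
  length_le : ∀ a b (q : G.Walk a b), q.IsPath → q.length ≤ p.length

theorem IsLongestPath_s14.reverse (hp : p.IsLongestPath_s14) : p.reverse.IsLongestPath_s14 :=
  ⟨hp.isPath.reverse, by simpa using hp.length_le⟩

theorem IsLongestPath_s14.not_support_perm_cons (hp : p.IsLongestPath_s14) (hx : x ∉ p.support)
    {a b : V} (r : G.Walk a b) : ¬r.support.Perm (x :: p.support) := by
  intro hr
  have hpath : r.IsPath := by
    rw [isPath_def, hr.nodup_iff]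
    exact List.nodup_cons.2 ⟨hx, hp.isPath.support_nodup⟩
  have := hr.length_eq
  simp only [length_support, List.length_cons] at this
  have := hp.length_le _ _ r hpath
  omega

theorem IsLongestPath_s14.not_adj_start (hp : p.IsLongestPath_s14) (hx : x ∉ p.support) :
    ¬G.Adj x u := fun h => hp.not_support_perm_cons hx (cons h p) (by simp)

theorem IsLongestPath_s14.not_adj_end (hp : p.IsLongestPath_s14) (hx : x ∉ p.support) :
    ¬G.Adj x v := hp.reverse.not_adj_start (by simpa using hx)

theorem IsLongestPath_s14.neighborSet_start_subset (hp : p.IsLongestPath_s14) :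
    G.neighborSet u ⊆ {z | z ∈ p.support ∧ z ≠ u} :=
  fun _ hz => ⟨by_contra fun h => hp.not_adj_start h hz.symm, hz.ne'⟩

theorem IsLongestPath_s14.neighborSet_end_subset (hp : p.IsLongestPath_s14) :
    G.neighborSet v ⊆ {z | z ∈ p.support ∧ z ≠ v} :=
  fun _ hz => ⟨by_contra fun h => hp.not_adj_end h hz.symm, hz.ne'⟩

theorem IsLongestPath_s14.not_adj_getVert_succ (hp : p.IsLongestPath_s14) (hx : x ∉ p.support)
    {m : ℕ} (hm : m < p.length) (hmx : G.Adj (p.getVert m) x) :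
    ¬G.Adj x (p.getVert (m + 1)) := fun hxm =>
  hp.not_support_perm_cons hx ((p.take m).append (cons hmx (cons hxm (p.drop (m + 1))))) <| by
    rw [support_eq_support_take_append_support_drop hm, support_append]
    exact List.perm_middle

theorem IsLongestPath_s14.not_adj_getVert_of_adj_start (hp : p.IsLongestPath_s14) (hx : x ∉ p.support)
    {m : ℕ} (hm : m < p.length) (hum : G.Adj u (p.getVert (m + 1))) :
    ¬G.Adj x (p.getVert m) := fun hxm =>
  hp.not_support_perm_cons hx
    (cons hxm ((p.take m).reverse.append (cons hum (p.drop (m + 1))))) <| by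
    rw [support_eq_support_take_append_support_drop hm, support_cons, support_append,
      support_reverse]
    exact ((List.reverse_perm _).append_right _).cons x

-- `u ⋯ pₘ v ⋯ pₘ₊₁ u` would be a cycle through all of `p`, which an edge leaving it opens up
-- into a longer path.
theorem IsLongestPath_s14.not_adj_start_getVert_succ (hp : p.IsLongestPath_s14) (hG : G.Connected)
    (hx : x ∉ p.support) {m : ℕ} (hm : m < p.length) (hmv : G.Adj (p.getVert m) v) :
    ¬G.Adj u (p.getVert (m + 1)) := by
  classical
  intro hum
  obtain ⟨y, hy, w, hw, hyw⟩ :=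
    hG.exists_adj_mem_not_mem (s := {x | x ∈ p.support}) p.start_mem_support hx
  have hc := support_tail_append_perm (p.take m) (p.drop (m + 1)) hmv hum.symm
  rw [← support_eq_support_take_append_support_drop hm] at hc
  obtain ⟨a, b, r, hr⟩ := exists_support_perm_cons_support_tail _
    (List.mem_of_mem_tail (hc.mem_iff.2 hy)) hyw
  exact hp.not_support_perm_cons hw r (hr.trans (hc.cons w))

theorem IsLongestPath_s14.ncard_not_mem_support_add_one_le [Fintype V] {k : ℕ}
    (hp : p.IsLongestPath_s14) (hG : G.Connected) (hσ : ∀ a b : V, a ≠ b → ¬G.Adj a b →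
      (Fintype.card V : ℤ) - k ≤ (G.deg' a : ℤ) + (G.deg' b : ℤ))
    (hL : 0 < p.length) (hx : x ∉ p.support) : {x | x ∉ p.support}.ncard + 1 ≤ k := by
  have hcross : ∀ m < p.length, G.Adj v (p.getVert m) → ¬G.Adj u (p.getVert (m + 1)) :=
    fun m hm hmv => hp.not_adj_start_getVert_succ hG hx hm hmv.symm
  have huv : ¬G.Adj u v := by
    have h := p.adj_getVert_succ (i := p.length - 1) (by omega)
    rw [Nat.sub_add_cancel hL, getVert_length] at h
    simpa [Nat.sub_add_cancel hL] using hcross _ (by omega) h.symm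
  have hne : u ≠ v := fun h => hL.ne' <| hp.isPath.getVert_injOn (by simp) (by simp)
    (by rw [getVert_zero, getVert_length, h])
  have := hp.isPath.deg'_add_deg'_le_length hp.neighborSet_end_subset
    hp.neighborSet_start_subset hcross
  have := hσ u v hne huv
  rw [hp.isPath.card_eq_length_add_one_add_ncard] at this
  push_cast at this
  omega

theorem IsLongestPath_s14.exists_not_mem_support_adj_of_adj_end [Fintype V] {k : ℕ}
    (hp : p.IsLongestPath_s14) (hk : 2 ≤ k) (hG : G.Connected)
    (hσ : ∀ a b : V, a ≠ b → ¬G.Adj a b →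
      (Fintype.card V : ℤ) - k ≤ (G.deg' a : ℤ) + (G.deg' b : ℤ))
    (hnotree : ¬G.HasSpanningKEndedTree k) (hL : 0 < p.length) :
    ∃ x ∉ p.support, ∀ m < p.length, G.Adj v (p.getVert m) → G.Adj x (p.getVert m) := by
  have hW_ge := hp.isPath.le_ncard_not_mem_support_add_one hG hnotree
  obtain ⟨w, hw⟩ := Set.nonempty_of_ncard_ne_zero (s := {x | x ∉ p.support}) (by omega)
  have hW_le := hp.ncard_not_mem_support_add_one_le hG hσ hL hw
  have hNw : G.neighborSet w ⊆ {z | z ∈ p.support ∧ z ≠ v} := by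
    refine fun z hz => ⟨by_contra fun hz' => ?_, fun h => hp.not_adj_end hw (h ▸ hz)⟩
    have := hp.isPath.le_ncard_not_mem_support_of_adj hG hnotree hw hz' hz
    omega
  have hwu : p.length ≤ G.deg' w + G.deg' u := by
    have := hσ w u (fun h => hw (h ▸ p.start_mem_support)) (hp.not_adj_start hw)
    rw [hp.isPath.card_eq_length_add_one_add_ncard] at this
    push_cast at this
    omega
  refine ⟨w, hw, fun m hm hvm => ?_⟩
  have hwu_cross : ∀ m < p.length, G.Adj w (p.getVert m) → ¬G.Adj u (p.getVert (m + 1)) :=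
    fun m hm hwm hum => hp.not_adj_getVert_of_adj_start hw hm hum hwm
  exact (hp.isPath.adj_or_adj_of_length_le hNw hp.neighborSet_start_subset hwu_cross hwu
    hm).resolve_right (hp.not_adj_start_getVert_succ hG hw hm hvm.symm)

end Walk

end SimpleGraph

theorem stmt_14 {V : Type*} [Fintype V] (G : SimpleGraph V) (k : ℕ) (hk : 2 ≤ k)
    (hconn : G.Connected)
    (hσ : ∀ u v : V, u ≠ v → ¬G.Adj u v →
      (Fintype.card V : ℤ) - k ≤ (G.deg' u : ℤ) + (G.deg' v : ℤ))
    (hnotree : ¬G.HasSpanningKEndedTree k)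
    (u v : V) (p : G.Walk u v) (hp : p.IsPath)
    (hlongest : ∀ (a b : V) (q : G.Walk a b), q.IsPath → q.length ≤ p.length) :
    ∀ i : ℕ, (h : i + 1 < p.support.length) →
      ¬(G.Adj v (p.support[i]'(Nat.lt_of_succ_lt h)) ∧ G.Adj v (p.support[i + 1]'h)) := by
  rintro i h ⟨hvi, hvi1⟩
  have hP : p.IsLongestPath_s14 := ⟨hp, hlongest⟩
  rw [Walk.support_getElem_eq_getVert] at hvi hvi1
  rw [Walk.length_support] at h
  have hi : i + 1 < p.length := lt_of_le_of_ne (by omega) fun h' => by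
    rw [h', Walk.getVert_length] at hvi1
    exact G.loopless.irrefl v hvi1
  obtain ⟨x, hx, hvx⟩ := hP.exists_not_mem_support_adj_of_adj_end hk hconn hσ hnotree (by omega)
  exact hP.not_adj_getVert_succ hx (by omega) (hvx i (by omega) hvi).symm (hvx _ hi hvi1)
end
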